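/- Recognition of virtual itineraries. Let 0 ≤ α < 1 < β, k := ⌈α+β⌉, A := {0,…,k−1}, γ := α+β−k+1. Suppose u, v ∈ A^ℕ satisfy φ̄_∞^{α,β}(u) = 0, φ̄_∞^{α,β}(σu) = α, φ̄_∞^{α,β}(v) = 1, φ̄_∞^{α,β}(σv) = γ, and u ≼ σⁿu ≺ v and u ≺ σⁿv ≼ v for all n ≥ 0. Then the following are equivalent: (1) u = u^{α,β}; (2) φ̄_∞^{α,β}(σⁿu) < 1 for all n ≥ 0; (3) φ̄_∞^{α,β}(σⁿv) > 0 for all n ≥ 0; (4) v = v^{α,β}. -/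

import Mathlib

/-!
A string `x` whose shifts all lie between `u` and `v` satisfies `xₙ + tₙ₊₁ = β tₙ + α` with
`tₙ = φ̄_∞(σⁿx)`: for `tₙ ∈ (0,1)` this is `φ̄` inverted, while at `tₙ = 0` (resp. `1`) the bound
`u ≼ σⁿx` (resp. `σⁿx ≼ v`) pins the tail value to `φ̄_∞(σu) = α` (resp. `φ̄_∞(σv) = γ`).
Such a relation with all `tₙ ∈ [0,1)` and `t₀ = 0` makes `x` the `T̂`-itinerary of `0` (the letters
are floors), with all `tₙ ∈ (0,1]` and `t₀ = 1` the `Ť`-itinerary of `1` (ceilings); conversely,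
`φ̄` contracts by `β⁻¹`, so the values of an itinerary are its orbit. Finally, two such codings with
equal initial values can first differ by a smaller letter of `x` only where `x`'s next value is `1`
and `y`'s is `0`; this excludes `σⁿu ≺ v` with `φ̄_∞(σⁿu) = 1` while `v`'s values stay positive, and
`u ≺ σⁿv` with `φ̄_∞(σⁿv) = 0` while `u`'s values stay below `1`.
-/

open Filter Set

/-- The shift map on one-sided sequences. -/
def shft (x : ℕ → ℕ) : ℕ → ℕ := fun n => x (n + 1)

/-- Strict lexicographic order on one-sided sequences:
`x ≺ y` iff they differ and `x m < y m` at the first index `m` where they differ. -/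
def lexLt (x y : ℕ → ℕ) : Prop := ∃ m, (∀ i, i < m → x i = y i) ∧ x m < y m

/-- Lexicographic order `x ≼ y` on one-sided sequences. -/
def lexLe (x y : ℕ → ℕ) : Prop := x = y ∨ lexLt x y

/-- The map `φ̄^{α,β} : ℝ → [0,1]`:  `0` for `t ≤ α`, `(t-α)/β` for `α ≤ t ≤ α+β`,
`1` for `t ≥ α+β`. -/
noncomputable def phiB (α β t : ℝ) : ℝ :=
  if t ≤ α then 0 else if α + β ≤ t then 1 else (t - α) / β

/-- `φ̄ₙ^{α,β}(x) = φ̄^{α,β}(x₀ + φ̄^{α,β}(x₁ + ⋯ + φ̄^{α,β}(x_{n-1})⋯))`. -/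
noncomputable def phiBN (α β : ℝ) : ℕ → (ℕ → ℕ) → ℝ
  | 0, _ => 0
  | n + 1, x => phiB α β (x 0 + phiBN α β n (shft x))

/-- `φ̄_∞^{α,β}(x) = limₙ φ̄ₙ^{α,β}(x)`; the sequence `φ̄ₙ^{α,β}(x)` is nondecreasing in `n`
and bounded, so its limit is its supremum. -/
noncomputable def phiBInf (α β : ℝ) (x : ℕ → ℕ) : ℝ := ⨆ n, phiBN α β n x

/-- `T̂_{α,β}(x) = βx + α − ⌊βx + α⌋`. -/
noncomputable def Tlow (α β x : ℝ) : ℝ := β * x + α - ⌊β * x + α⌋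

/-- `Ť_{α,β}(x) = βx + α + 1 − ⌈βx + α⌉`. -/
noncomputable def Thigh (α β x : ℝ) : ℝ := β * x + α + 1 - ⌈β * x + α⌉

/-- `k = ⌈α + β⌉`, the size of the alphabet `A = {0, …, k-1}`. -/
noncomputable def kAB (α β : ℝ) : ℕ := (⌈α + β⌉).toNat

/-- The string `u^{α,β}`, the coding of the orbit of `0`:
`u^{α,β}ₙ = ⌊β T̂ⁿ_{α,β}(0) + α⌋`. -/
noncomputable def uItin (α β : ℝ) : ℕ → ℕ := fun n => (⌊β * (Tlow α β)^[n] 0 + α⌋).toNat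

/-- The string `v^{α,β}`, the coding of the orbit of `1`:
`v^{α,β}ₙ = ⌈β Ťⁿ_{α,β}(1) + α⌉ − 1`. -/
noncomputable def vItin (α β : ℝ) : ℕ → ℕ := fun n => (⌈β * (Thigh α β)^[n] 1 + α⌉ - 1).toNat

/-- The shift space `Σ(u,v) = {x ∈ A^ℕ : u ≼ σⁿx ≼ v for all n ≥ 0}`, `A = {0,…,k-1}`. -/
def SigSet (k : ℕ) (u v : ℕ → ℕ) : Set (ℕ → ℕ) :=
  {x | (∀ i, x i < k) ∧ ∀ n, lexLe u (shft^[n] x) ∧ lexLe (shft^[n] x) v}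

/-- The number of words of length `n` in the language of `Σ(u,v)` (prefixes of elements). -/
noncomputable def nWords (k : ℕ) (u v : ℕ → ℕ) (n : ℕ) : ℕ :=
  Nat.card {w : Fin n → ℕ // ∃ x ∈ SigSet k u v, ∀ i : Fin n, x i.1 = w i}

/-- The topological entropy (base 2) of `Σ(u,v)`:
`h = limₙ (1/n) log₂ card(Lₙ)` (the limit exists by subadditivity, so it equals the limsup;
it is `0` when `Σ(u,v) = ∅`). -/
noncomputable def entS (k : ℕ) (u v : ℕ → ℕ) : ℝ :=
  Filter.limsup (fun n : ℕ => Real.logb 2 (nWords k u v n) / (n : ℝ)) Filter.atTop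

/-- Concatenation of the word `w₀ ⋯ w_{p-1}` (the first `p` letters of `w`) with the
string `y`. -/
def wcat (p : ℕ) (w y : ℕ → ℕ) : ℕ → ℕ := fun n => if n < p then w n else y (n - p)

open Topology

section PhiB

variable {α β : ℝ}

lemma phiB_eq_max_min (hβ : 0 < β) (t : ℝ) :
    phiB α β t = max 0 (min 1 ((t - α) / β)) := by
  unfold phiB
  split_ifs with h₁ h₂
  · have : (t - α) / β ≤ 0 := div_nonpos_of_nonpos_of_nonneg (by linarith) hβ.le
    simp [this, this.trans zero_le_one]
  · have : 1 ≤ (t - α) / β := (le_div_iff₀ hβ).2 (by linarith)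
    simp [this]
  · have h₀ : 0 ≤ (t - α) / β := div_nonneg (by linarith) hβ.le
    have h₁ : (t - α) / β ≤ 1 := (div_le_one hβ).2 (by linarith)
    rw [min_eq_right h₁, max_eq_right h₀]

lemma phiB_nonneg (t : ℝ) : 0 ≤ phiB α β t := by
  unfold phiB
  split_ifs with h₁ h₂
  · rfl
  · exact zero_le_one
  · exact div_nonneg (by linarith) (by linarith)

lemma phiB_le_one (t : ℝ) : phiB α β t ≤ 1 := by
  unfold phiB
  split_ifs with h₁ h₂
  · exact zero_le_one
  · rfl
  · exact (div_le_one (by linarith)).2 (by linarith)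

lemma phiB_monotone (hβ : 0 < β) : Monotone (phiB α β) := by
  intro s t hst
  simp only [phiB_eq_max_min hβ]
  gcongr

lemma phiB_continuous (hβ : 0 < β) : Continuous (phiB α β) := by
  rw [funext (phiB_eq_max_min hβ)]
  fun_prop

lemma abs_phiB_sub_phiB_le (hβ : 0 < β) (s t : ℝ) :
    |phiB α β s - phiB α β t| ≤ |s - t| / β := by
  simp only [phiB_eq_max_min hβ, max_comm (0 : ℝ)]
  calc |max (min 1 ((s - α) / β)) 0 - max (min 1 ((t - α) / β)) 0|
      ≤ |min 1 ((s - α) / β) - min 1 ((t - α) / β)| := abs_max_sub_max_le_abs _ _ _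
    _ ≤ max |1 - 1| |(s - α) / β - (t - α) / β| := abs_min_sub_min_le_max _ _ _ _
    _ = |s - t| / β := by
      rw [sub_self, abs_zero, ← sub_div, sub_sub_sub_cancel_right, abs_div, abs_of_pos hβ]
      exact max_eq_right (by positivity)

lemma phiB_mul_add (hβ : 0 < β) {t : ℝ} (ht₀ : 0 ≤ t) (ht₁ : t ≤ 1) :
    phiB α β (β * t + α) = t := by
  rw [phiB_eq_max_min hβ, add_sub_cancel_right, mul_div_cancel_left₀ t hβ.ne',
    min_eq_right ht₁, max_eq_right ht₀]

lemma le_mul_phiB_add_of_phiB_lt_one (hβ : 0 < β) {s : ℝ} (h : phiB α β s < 1) :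
    s ≤ β * phiB α β s + α := by
  unfold phiB at *
  split_ifs at * with h₁ h₂
  · linarith
  · linarith
  · rw [mul_div_cancel₀ _ hβ.ne']
    linarith

lemma mul_phiB_add_le_of_phiB_pos (hβ : 0 < β) {s : ℝ} (h : 0 < phiB α β s) :
    β * phiB α β s + α ≤ s := by
  unfold phiB at *
  split_ifs at * with h₁ h₂
  · linarith
  · linarith
  · rw [mul_div_cancel₀ _ hβ.ne']
    linarith

end PhiB

lemma lexLe.head_le {x y : ℕ → ℕ} (h : lexLe x y) : x 0 ≤ y 0 := by
  rcases h with rfl | ⟨m, hagree, hlt⟩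
  · rfl
  · rcases m with _ | m
    · exact hlt.le
    · exact (hagree 0 m.succ_pos).le

lemma lexLe.shft {x y : ℕ → ℕ} (h : lexLe x y) (h₀ : y 0 ≤ x 0) :
    lexLe (shft x) (shft y) := by
  rcases h with rfl | ⟨m, hagree, hlt⟩
  · exact Or.inl rfl
  · rcases m with _ | m
    · omega
    · exact Or.inr ⟨m, fun i hi => hagree (i + 1) (by omega), hlt⟩

lemma shft_iterate_apply (x : ℕ → ℕ) (n m : ℕ) : shft^[n] x m = x (n + m) := by
  induction n generalizing x with
  | zero => simp
  | succ n ih =>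
    rw [Function.iterate_succ_apply, ih]
    simp only [shft]
    congr 1
    omega

section PhiBInf

variable {α β : ℝ}

lemma phiBN_nonneg (n : ℕ) (x : ℕ → ℕ) : 0 ≤ phiBN α β n x := by
  cases n with
  | zero => rfl
  | succ n => exact phiB_nonneg _

lemma phiBN_le_one (n : ℕ) (x : ℕ → ℕ) : phiBN α β n x ≤ 1 := by
  cases n with
  | zero => exact zero_le_one
  | succ n => exact phiB_le_one _

lemma phiBN_le_phiBN_succ (hβ : 0 < β) (n : ℕ) (x : ℕ → ℕ) :
    phiBN α β n x ≤ phiBN α β (n + 1) x := by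
  induction n generalizing x with
  | zero => exact phiB_nonneg _
  | succ n ih => exact phiB_monotone hβ (by gcongr; exact ih (shft x))

lemma phiBN_monotone (hβ : 0 < β) (x : ℕ → ℕ) : Monotone fun n => phiBN α β n x :=
  monotone_nat_of_le_succ fun n => phiBN_le_phiBN_succ hβ n x

lemma bddAbove_range_phiBN (x : ℕ → ℕ) : BddAbove (range fun n => phiBN α β n x) :=
  ⟨1, by rintro _ ⟨n, rfl⟩; exact phiBN_le_one n x⟩

lemma phiBN_mono_lex (hβ : 0 < β) (n : ℕ) {x y : ℕ → ℕ} (h : lexLe x y) :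
    phiBN α β n x ≤ phiBN α β n y := by
  induction n generalizing x y with
  | zero => rfl
  | succ n ih =>
    refine phiB_monotone hβ ?_
    rcases h with rfl | ⟨_ | m, hagree, hlt⟩
    · rfl
    · -- a strictly smaller first letter outweighs any tail, since tails contribute at most 1
      have : (x 0 : ℝ) + 1 ≤ y 0 := by exact_mod_cast hlt
      linarith [phiBN_le_one (α := α) (β := β) n (shft x),
        phiBN_nonneg (α := α) (β := β) n (shft y)]
    · rw [hagree 0 m.succ_pos]
      gcongr
      exact ih (Or.inr ⟨m, fun i hi => hagree (i + 1) (by omega), hlt⟩)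

lemma phiBInf_nonneg (x : ℕ → ℕ) : 0 ≤ phiBInf α β x :=
  le_ciSup_of_le (bddAbove_range_phiBN x) 0 le_rfl

lemma phiBInf_le_one (x : ℕ → ℕ) : phiBInf α β x ≤ 1 :=
  ciSup_le fun n => phiBN_le_one n x

lemma tendsto_phiBN (hβ : 0 < β) (x : ℕ → ℕ) :
    Tendsto (fun n => phiBN α β n x) atTop (𝓝 (phiBInf α β x)) :=
  tendsto_atTop_ciSup (phiBN_monotone hβ x) (bddAbove_range_phiBN x)

lemma phiBInf_eq_phiB (hβ : 0 < β) (x : ℕ → ℕ) :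
    phiBInf α β x = phiB α β (x 0 + phiBInf α β (shft x)) := by
  have hcont : Continuous fun r : ℝ => phiB α β (x 0 + r) :=
    (phiB_continuous hβ).comp (continuous_const.add continuous_id)
  exact tendsto_nhds_unique ((tendsto_phiBN hβ x).comp (tendsto_add_atTop_nat 1))
    ((hcont.tendsto _).comp (tendsto_phiBN hβ (shft x)))

lemma phiBInf_shft_iterate (hβ : 0 < β) (x : ℕ → ℕ) (n : ℕ) :
    phiBInf α β (shft^[n] x) = phiB α β (x n + phiBInf α β (shft^[n + 1] x)) := by
  rw [phiBInf_eq_phiB hβ, shft_iterate_apply, Function.iterate_succ_apply', add_zero]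

lemma phiBInf_mono_lex (hβ : 0 < β) {x y : ℕ → ℕ} (h : lexLe x y) :
    phiBInf α β x ≤ phiBInf α β y :=
  ciSup_mono (bddAbove_range_phiBN y) fun n => phiBN_mono_lex hβ n h

end PhiBInf

/-- `x` is the sequence of integer parts along an orbit `t` of `s ↦ β s + α (mod 1)`,
e.g. of `T̂` or `Ť`. -/
def IsCoding (α β : ℝ) (x : ℕ → ℕ) (t : ℕ → ℝ) : Prop :=
  ∀ n, (x n : ℝ) + t (n + 1) = β * t n + α

section Coding

variable {α β : ℝ} {x : ℕ → ℕ} {t : ℕ → ℝ}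

lemma phiBInf_shft_iterate_eq_of_isCoding (hβ : 1 < β) (hx : IsCoding α β x t)
    (ht₀ : ∀ n, 0 ≤ t n) (ht₁ : ∀ n, t n ≤ 1) (n : ℕ) :
    phiBInf α β (shft^[n] x) = t n := by
  have hβ₀ : 0 < β := by linarith
  -- `φ̄` contracts by `β⁻¹`, and `t` solves the same recursion as `φ̄_∞ ∘ σⁿ`
  have hcontract : ∀ m n, |t n - phiBInf α β (shft^[n] x)| ≤ β⁻¹ ^ m := by
    intro m
    induction m with
    | zero =>
      intro n
      rw [pow_zero, abs_sub_le_iff]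
      constructor <;> linarith [ht₀ n, ht₁ n, phiBInf_nonneg (α := α) (β := β) (shft^[n] x),
        phiBInf_le_one (α := α) (β := β) (shft^[n] x)]
    | succ m ih =>
      intro n
      calc |t n - phiBInf α β (shft^[n] x)|
          = |phiB α β (x n + t (n + 1)) - phiB α β (x n + phiBInf α β (shft^[n + 1] x))| := by
            rw [hx n, phiB_mul_add hβ₀ (ht₀ n) (ht₁ n), phiBInf_shft_iterate hβ₀]
        _ ≤ |(x n + t (n + 1)) - (x n + phiBInf α β (shft^[n + 1] x))| / β :=
            abs_phiB_sub_phiB_le hβ₀ _ _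
        _ ≤ β⁻¹ ^ m / β := by rw [add_sub_add_left_eq_sub]; gcongr; exact ih (n + 1)
        _ = β⁻¹ ^ (m + 1) := by rw [pow_succ, div_eq_mul_inv]
  have hlim : Tendsto (fun m => β⁻¹ ^ m) atTop (𝓝 0) :=
    tendsto_pow_atTop_nhds_zero_of_lt_one (by positivity) (inv_lt_one_of_one_lt₀ hβ)
  have habs := ge_of_tendsto' hlim fun m => hcontract m n
  exact (sub_eq_zero.1 (abs_nonpos_iff.1 habs)).symm

lemma eq_uItin_of_isCoding (hx : IsCoding α β x t) (h₀ : t 0 = 0)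
    (ht : ∀ n, t n ∈ Ico 0 1) :
    x = uItin α β := by
  have hfloor : ∀ n, ⌊β * t n + α⌋ = x n := fun n => by
    rw [Int.floor_eq_iff, ← hx n]
    constructor <;> push_cast <;> linarith [(ht (n + 1)).1, (ht (n + 1)).2]
  have horbit : ∀ n, t n = (Tlow α β)^[n] 0 := by
    intro n
    induction n with
    | zero => exact h₀
    | succ n ih =>
      rw [Function.iterate_succ_apply', ← ih, Tlow, hfloor]
      push_cast
      linarith [hx n]
  funext n
  rw [uItin, ← horbit, hfloor, Int.toNat_natCast]

lemma eq_vItin_of_isCoding (hx : IsCoding α β x t) (h₀ : t 0 = 1)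
    (ht : ∀ n, t n ∈ Ioc 0 1) :
    x = vItin α β := by
  have hceil : ∀ n, ⌈β * t n + α⌉ = x n + 1 := fun n => by
    rw [Int.ceil_eq_iff, ← hx n]
    constructor <;> push_cast <;> linarith [(ht (n + 1)).1, (ht (n + 1)).2]
  have horbit : ∀ n, t n = (Thigh α β)^[n] 1 := by
    intro n
    induction n with
    | zero => exact h₀
    | succ n ih =>
      rw [Function.iterate_succ_apply', ← ih, Thigh, hceil]
      push_cast
      linarith [hx n]
  funext n
  rw [vItin, ← horbit, hceil, add_sub_cancel_right, Int.toNat_natCast]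

lemma Tlow_iterate_zero_mem (n : ℕ) : (Tlow α β)^[n] 0 ∈ Ico 0 1 := by
  cases n with
  | zero => simp
  | succ n =>
    rw [Function.iterate_succ_apply']
    exact ⟨Int.fract_nonneg _, Int.fract_lt_one _⟩

lemma Thigh_iterate_one_mem (n : ℕ) : (Thigh α β)^[n] 1 ∈ Ioc 0 1 := by
  cases n with
  | zero => simp
  | succ n =>
    rw [Function.iterate_succ_apply', Thigh]
    constructor <;> linarith [Int.ceil_lt_add_one (β * (Thigh α β)^[n] 1 + α),
      Int.le_ceil (β * (Thigh α β)^[n] 1 + α)]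

lemma isCoding_uItin (hα : 0 ≤ α) (hβ : 0 ≤ β) :
    IsCoding α β (uItin α β) fun n => (Tlow α β)^[n] 0 := by
  intro n
  have hnonneg : 0 ≤ ⌊β * (Tlow α β)^[n] 0 + α⌋ :=
    Int.floor_nonneg.2 (add_nonneg (mul_nonneg hβ (Tlow_iterate_zero_mem n).1) hα)
  have hcast : (uItin α β n : ℝ) = ⌊β * (Tlow α β)^[n] 0 + α⌋ := by
    exact_mod_cast Int.toNat_of_nonneg hnonneg
  dsimp only
  rw [hcast, Function.iterate_succ_apply', Tlow]
  ring

lemma isCoding_vItin (hα : 0 ≤ α) (hβ : 0 < β) :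
    IsCoding α β (vItin α β) fun n => (Thigh α β)^[n] 1 := by
  intro n
  have hpos : 0 < ⌈β * (Thigh α β)^[n] 1 + α⌉ :=
    Int.ceil_pos.2 (add_pos_of_pos_of_nonneg (mul_pos hβ (Thigh_iterate_one_mem n).1) hα)
  have hcast : (vItin α β n : ℝ) = ⌈β * (Thigh α β)^[n] 1 + α⌉ - 1 := by
    exact_mod_cast Int.toNat_of_nonneg (show 0 ≤ ⌈β * (Thigh α β)^[n] 1 + α⌉ - 1 by omega)
  dsimp only
  rw [hcast, Function.iterate_succ_apply', Thigh]
  ring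

lemma not_lexLt_of_isCoding {y : ℕ → ℕ} {r s : ℕ → ℝ} (hx : IsCoding α β x r)
    (hy : IsCoding α β y s) (hr : ∀ n, r n ≤ 1) (hs : ∀ n, 0 ≤ s n) (h₀ : r 0 = s 0)
    (hrs : ∀ n, r n < 1 ∨ 0 < s n) : ¬ lexLt x y := by
  rintro ⟨m, hagree, hlt⟩
  have heq : ∀ i ≤ m, r i = s i := by
    intro i hi
    induction i with
    | zero => exact h₀
    | succ i ih =>
      have hxy : (x i : ℝ) = y i := by exact_mod_cast hagree i (by omega)
      have hyi := hy i
      rw [← ih (by omega)] at hyi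
      linarith [hx i]
  have hlt' : (x m : ℝ) + 1 ≤ y m := by exact_mod_cast hlt
  have hym := hy m
  rw [← heq m le_rfl] at hym
  rcases hrs (m + 1) with h | h <;> linarith [hx m, hr (m + 1), hs (m + 1)]

lemma not_lexLt_of_isCoding_phiBInf {y : ℕ → ℕ}
    (hx : IsCoding α β x fun n => phiBInf α β (shft^[n] x))
    (hy : IsCoding α β y fun n => phiBInf α β (shft^[n] y))
    (h₀ : phiBInf α β x = phiBInf α β y)
    (h : ∀ n, phiBInf α β (shft^[n] x) < 1 ∨ 0 < phiBInf α β (shft^[n] y)) : ¬ lexLt x y :=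
  not_lexLt_of_isCoding hx hy (fun _ => phiBInf_le_one _) (fun _ => phiBInf_nonneg _) h₀ h

lemma phiBInf_shft_iterate_uItin (hα : 0 ≤ α) (hβ : 1 < β) (n : ℕ) :
    phiBInf α β (shft^[n] (uItin α β)) = (Tlow α β)^[n] 0 :=
  phiBInf_shft_iterate_eq_of_isCoding hβ (isCoding_uItin hα (by linarith))
    (fun n => (Tlow_iterate_zero_mem n).1) (fun n => (Tlow_iterate_zero_mem n).2.le) n

lemma phiBInf_shft_iterate_vItin (hα : 0 ≤ α) (hβ : 1 < β) (n : ℕ) :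
    phiBInf α β (shft^[n] (vItin α β)) = (Thigh α β)^[n] 1 :=
  phiBInf_shft_iterate_eq_of_isCoding hβ (isCoding_vItin hα (by linarith))
    (fun n => (Thigh_iterate_one_mem n).1.le) (fun n => (Thigh_iterate_one_mem n).2) n

end Coding

section ShiftSpace

variable {α β : ℝ} {u v x : ℕ → ℕ}

lemma kAB_lt_add_one (h : 0 ≤ α + β) : (kAB α β : ℝ) < α + β + 1 := by
  have hk : (kAB α β : ℤ) = ⌈α + β⌉ := Int.toNat_of_nonneg (Int.ceil_nonneg h)
  have hlt : ((kAB α β : ℤ) : ℝ) < α + β + 1 := hk ▸ Int.ceil_lt_add_one _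
  exact_mod_cast hlt

lemma add_phiBInf_shft_iterate_succ_le (hα : 0 ≤ α) (hβ : 0 < β)
    (hvγ : phiBInf α β (shft v) = α + β - kAB α β + 1) (hv₀ : v 0 < kAB α β)
    (hxv : ∀ n, lexLe (shft^[n] x) v) (n : ℕ) :
    x n + phiBInf α β (shft^[n + 1] x) ≤ β * phiBInf α β (shft^[n] x) + α := by
  have hrec := phiBInf_shft_iterate (α := α) hβ x n
  rcases (phiBInf_le_one (shft^[n] x)).lt_or_eq with hlt | htop
  · rw [hrec] at hlt ⊢
    exact le_mul_phiB_add_of_phiB_lt_one hβ hlt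
  · -- `φ̄_∞(σⁿx) = 1` forces the top letter `k - 1`; then `σⁿx ≼ v` caps the tail by `σv`
    have hge := mul_phiB_add_le_of_phiB_pos hβ (α := α) (hrec ▸ htop ▸ one_pos)
    rw [← hrec, htop] at hge
    have hxn : x n + 1 = kAB α β := by
      have hle : x n ≤ v 0 := by simpa [shft_iterate_apply] using (hxv n).head_le
      have hk : (kAB α β : ℝ) < x n + 2 := by
        linarith [kAB_lt_add_one (by linarith : 0 ≤ α + β),
          phiBInf_le_one (α := α) (β := β) (shft^[n + 1] x)]
      have : kAB α β < x n + 2 := by exact_mod_cast hk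
      omega
    have htail : phiBInf α β (shft^[n + 1] x) ≤ α + β - kAB α β + 1 := by
      rw [← hvγ, Function.iterate_succ_apply']
      exact phiBInf_mono_lex hβ ((hxv n).shft (by rw [shft_iterate_apply, add_zero]; omega))
    have hxn' : (x n : ℝ) = kAB α β - 1 := by rw [← hxn]; push_cast; ring
    rw [htop]
    linarith

lemma le_add_phiBInf_shft_iterate_succ (hα : α < 1) (hβ : 0 < β)
    (huα : phiBInf α β (shft u) = α) (hxu : ∀ n, lexLe u (shft^[n] x)) (n : ℕ) :
    β * phiBInf α β (shft^[n] x) + α ≤ x n + phiBInf α β (shft^[n + 1] x) := by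
  have hrec := phiBInf_shft_iterate (α := α) hβ x n
  rcases (phiBInf_nonneg (shft^[n] x)).eq_or_lt with hbot | hpos
  · -- `φ̄_∞(σⁿx) = 0` forces the letter `0`; then `u ≼ σⁿx` bounds the tail below by `σu`
    have hle := le_mul_phiB_add_of_phiB_lt_one hβ (α := α) (hrec ▸ hbot ▸ zero_lt_one)
    rw [← hrec, ← hbot] at hle
    have hxn : x n = 0 := by
      have : (x n : ℝ) < 1 := by
        linarith [phiBInf_nonneg (α := α) (β := β) (shft^[n + 1] x)]
      exact_mod_cast Nat.lt_one_iff.1 (by exact_mod_cast this)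
    have htail : α ≤ phiBInf α β (shft^[n + 1] x) := by
      have := phiBInf_mono_lex (α := α) hβ
        ((hxu n).shft (by rw [shft_iterate_apply, add_zero]; omega))
      rwa [huα, ← Function.iterate_succ_apply' shft] at this
    rw [← hbot, hxn]
    simpa using htail
  · rw [hrec] at hpos ⊢
    exact mul_phiB_add_le_of_phiB_pos hβ hpos

lemma isCoding_phiBInf_shft_iterate (hα₀ : 0 ≤ α) (hα₁ : α < 1) (hβ : 0 < β)
    (huα : phiBInf α β (shft u) = α) (hvγ : phiBInf α β (shft v) = α + β - kAB α β + 1)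
    (hv₀ : v 0 < kAB α β) (hxu : ∀ n, lexLe u (shft^[n] x))
    (hxv : ∀ n, lexLe (shft^[n] x) v) :
    IsCoding α β x fun n => phiBInf α β (shft^[n] x) := fun n =>
  le_antisymm (add_phiBInf_shft_iterate_succ_le hα₀ hβ hvγ hv₀ hxv n)
    (le_add_phiBInf_shft_iterate_succ hα₁ hβ huα hxu n)

end ShiftSpace

theorem recognition_of_itineraries_general (α β : ℝ) (hα0 : 0 ≤ α) (hα1 : α < 1) (hβ : 1 < β)
    (u v : ℕ → ℕ) (hv : ∀ i, v i < kAB α β)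
    (hu0 : phiBInf α β u = 0) (huα : phiBInf α β (shft u) = α)
    (hv1 : phiBInf α β v = 1)
    (hvγ : phiBInf α β (shft v) = α + β - kAB α β + 1)
    (hcond : ∀ n, lexLe u (shft^[n] u) ∧ lexLt (shft^[n] u) v ∧
                  lexLt u (shft^[n] v) ∧ lexLe (shft^[n] v) v) :
    ((u = uItin α β) ↔ (∀ n, phiBInf α β (shft^[n] u) < 1)) ∧
    ((∀ n, phiBInf α β (shft^[n] u) < 1) ↔ (∀ n, 0 < phiBInf α β (shft^[n] v))) ∧
    ((∀ n, 0 < phiBInf α β (shft^[n] v)) ↔ (v = vItin α β)) := by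
  have hβ₀ : 0 < β := by linarith
  have hcoding : ∀ x : ℕ → ℕ, (∀ n, lexLe u (shft^[n] x)) →
      (∀ n, lexLe (shft^[n] x) v) → IsCoding α β x fun n => phiBInf α β (shft^[n] x) :=
    fun _ => isCoding_phiBInf_shft_iterate hα0 hα1 hβ₀ huα hvγ (hv 0)
  have hu_cod : ∀ m, IsCoding α β (shft^[m] u) fun n => phiBInf α β (shft^[n] (shft^[m] u)) :=
    fun m => hcoding _ (fun n => Function.iterate_add_apply shft n m u ▸ (hcond _).1)
      (fun n => Function.iterate_add_apply shft n m u ▸ Or.inr (hcond _).2.1)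
  have hv_cod : ∀ m, IsCoding α β (shft^[m] v) fun n => phiBInf α β (shft^[n] (shft^[m] v)) :=
    fun m => hcoding _ (fun n => Function.iterate_add_apply shft n m v ▸ Or.inr (hcond _).2.2.1)
      (fun n => Function.iterate_add_apply shft n m v ▸ (hcond _).2.2.2)
  refine ⟨⟨fun h n => ?_, fun h => ?_⟩, ⟨fun h m => ?_, fun h m => ?_⟩,
    ⟨fun h => ?_, fun h n => ?_⟩⟩
  · rw [h, phiBInf_shft_iterate_uItin hα0 hβ]
    exact (Tlow_iterate_zero_mem n).2
  · exact eq_uItin_of_isCoding (hu_cod 0) hu0 fun n => ⟨phiBInf_nonneg _, h n⟩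
  · refine (phiBInf_nonneg _).lt_of_ne fun hm => not_lexLt_of_isCoding_phiBInf (hu_cod 0)
      (hv_cod m) ?_ (fun n => Or.inl (h n)) (hcond m).2.2.1
    simpa [hu0] using hm
  · refine (phiBInf_le_one _).lt_of_ne fun hm => not_lexLt_of_isCoding_phiBInf (hu_cod m)
      (hv_cod 0) ?_ (fun n => Or.inr (h n)) (hcond m).2.1
    simpa [hv1] using hm
  · exact eq_vItin_of_isCoding (hv_cod 0) hv1 fun n => ⟨h n, phiBInf_le_one _⟩
  · rw [h, phiBInf_shft_iterate_vItin hα0 hβ]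
    exact (Thigh_iterate_one_mem n).1

/-- **Recognition of virtual itineraries.** Let `0 ≤ α < 1 < β`, `k = ⌈α+β⌉`,
`γ = α+β−k+1`. Suppose `u, v ∈ A^ℕ` satisfy `φ̄_∞^{α,β}(u) = 0`, `φ̄_∞^{α,β}(σu) = α`,
`φ̄_∞^{α,β}(v) = 1`, `φ̄_∞^{α,β}(σv) = γ`, and `u ≼ σⁿu ≺ v`, `u ≺ σⁿv ≼ v` for all
`n ≥ 0`. Then the following are equivalent: (1) `u = u^{α,β}`;
(2) `φ̄_∞^{α,β}(σⁿu) < 1` for all `n ≥ 0`; (3) `φ̄_∞^{α,β}(σⁿv) > 0` for all `n ≥ 0`;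
(4) `v = v^{α,β}`. -/
theorem recognition_of_itineraries (α β : ℝ) (hα0 : 0 ≤ α) (hα1 : α < 1) (hβ : 1 < β)
    (u v : ℕ → ℕ) (hu : ∀ i, u i < kAB α β) (hv : ∀ i, v i < kAB α β)
    (hu0 : phiBInf α β u = 0) (huα : phiBInf α β (shft u) = α)
    (hv1 : phiBInf α β v = 1)
    (hvγ : phiBInf α β (shft v) = α + β - kAB α β + 1)
    (hcond : ∀ n, lexLe u (shft^[n] u) ∧ lexLt (shft^[n] u) v ∧
                  lexLt u (shft^[n] v) ∧ lexLe (shft^[n] v) v) :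
    ((u = uItin α β) ↔ (∀ n, phiBInf α β (shft^[n] u) < 1)) ∧
    ((∀ n, phiBInf α β (shft^[n] u) < 1) ↔ (∀ n, 0 < phiBInf α β (shft^[n] v))) ∧
    ((∀ n, 0 < phiBInf α β (shft^[n] v)) ↔ (v = vItin α β)) :=
  recognition_of_itineraries_general α β hα0 hα1 hβ u v hv hu0 huα hv1 hvγ hcond
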